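/- If A|B is an H-separable ring extension, then the map A ⊗_B A → Hom_Z(R, A) sending a ⊗ a' to (r ↦ a r a') is bijective, with inverse g ↦ Σ_i g(r_i) e_i. -/

import Mathlib

open TensorProduct

noncomputable section

namespace D2

variable (A : Type*) [Ring A] (B : Subring A)

/-- The defining relations of `A ⊗_B A` as a quotient of `A ⊗_ℤ A`. -/
def relSub : Submodule ℤ (A ⊗[ℤ] A) :=
  Submodule.span ℤ {x | ∃ (a c : A) (b : B), x = (a * (b : A)) ⊗ₜ[ℤ] c - a ⊗ₜ[ℤ] ((b : A) * c)}

/-- The tensor square `A ⊗_B A` of a ring extension `B ⊆ A`. -/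
abbrev TensorSq := (A ⊗[ℤ] A) ⧸ relSub A B

/-- The class of a simple tensor `a ⊗_B c`. -/
def tmulB (a c : A) : TensorSq A B := Submodule.Quotient.mk (a ⊗ₜ[ℤ] c)

/-- Left multiplication `a₀ • (x ⊗ y) = (a₀ x) ⊗ y` on `A ⊗_B A`. -/
def lmul (a : A) : TensorSq A B →ₗ[ℤ] TensorSq A B :=
  Submodule.mapQ _ _ (TensorProduct.map (LinearMap.mulLeft ℤ a) LinearMap.id) (by
    rw [relSub, Submodule.span_le]
    rintro x ⟨a', c, b, rfl⟩
    simp only [SetLike.mem_coe, Submodule.mem_comap, map_sub, TensorProduct.map_tmul,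
      LinearMap.mulLeft_apply, LinearMap.id_apply]
    show TensorProduct.map (LinearMap.mulLeft ℤ a) LinearMap.id
      ((a' * b) ⊗ₜ[ℤ] c - a' ⊗ₜ[ℤ] (b * c)) ∈ Submodule.span ℤ _
    erw [map_sub]
    simp only [TensorProduct.map_tmul, LinearMap.mulLeft_apply, LinearMap.id_apply]
    refine Submodule.subset_span ⟨a * a', c, b, by rw [mul_assoc]⟩)

/-- Right multiplication `(x ⊗ y) • a₀ = x ⊗ (y a₀)` on `A ⊗_B A`. -/
def rmul (a : A) : TensorSq A B →ₗ[ℤ] TensorSq A B :=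
  Submodule.mapQ _ _ (TensorProduct.map LinearMap.id (LinearMap.mulRight ℤ a)) (by
    rw [relSub, Submodule.span_le]
    rintro x ⟨a', c, b, rfl⟩
    simp only [SetLike.mem_coe, Submodule.mem_comap, map_sub, TensorProduct.map_tmul,
      LinearMap.mulRight_apply, LinearMap.id_apply]
    show TensorProduct.map LinearMap.id (LinearMap.mulRight ℤ a)
      ((a' * b) ⊗ₜ[ℤ] c - a' ⊗ₜ[ℤ] (b * c)) ∈ Submodule.span ℤ _
    erw [map_sub]
    simp only [TensorProduct.map_tmul, LinearMap.mulRight_apply, LinearMap.id_apply]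
    refine Submodule.subset_span ⟨a', c * a, b, by rw [mul_assoc]⟩)

/-- The multiplication map `A ⊗_B A → A`, `x ⊗ y ↦ x y`. -/
def mulQ : TensorSq A B →ₗ[ℤ] A :=
  Submodule.liftQ _ (LinearMap.mul' ℤ A) (by
    rw [relSub, Submodule.span_le]
    rintro x ⟨a, c, b, rfl⟩
    simp [LinearMap.mem_ker, mul_assoc]
    show LinearMap.mul' ℤ A ((a * b) ⊗ₜ[ℤ] c - a ⊗ₜ[ℤ] (b * c)) = 0
    erw [map_sub]
    simp [mul_assoc])

/-- An element `t` of `A ⊗_B A` is `B`-central when `b t = t b` for all `b ∈ B`. -/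
def IsBCentral (t : TensorSq A B) : Prop := ∀ b ∈ B, lmul A B b t = rmul A B b t

/-- An element `t` of `A ⊗_B A` is `A`-central (a Casimir element) when `a t = t a`. -/
def IsACentral (t : TensorSq A B) : Prop := ∀ a : A, lmul A B a t = rmul A B a t

/-- A `B`-`B`-bimodule endomorphism of `A`. -/
def IsBB (α : A →ₗ[ℤ] A) : Prop :=
  ∀ b ∈ B, ∀ a : A, α ((b : A) * a) = b * α a ∧ α (a * b) = α a * b

/-- A right `B`-module endomorphism of `A`. -/
def IsRightB (f : A →ₗ[ℤ] A) : Prop := ∀ a : A, ∀ b ∈ B, f (a * b) = f a * b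

/-- `x ↦ (x·) ⊗ id` as a linear map, used to build Sweedler-type expressions. -/
def lmulTen : A →ₗ[ℤ] (A ⊗[ℤ] A) →ₗ[ℤ] (A ⊗[ℤ] A) where
  toFun a := TensorProduct.map (LinearMap.mulLeft ℤ a) LinearMap.id
  map_add' a a' := by
    apply TensorProduct.ext'
    intro x y
    simp [add_mul, TensorProduct.add_tmul]
    first | rfl | (erw [LinearMap.add_apply]; simp)
  map_smul' z a := by
    apply TensorProduct.ext'
    intro x y
    simp only [TensorProduct.map_tmul, LinearMap.mulLeft_apply, LinearMap.id_apply,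
      LinearMap.smul_apply, RingHom.id_apply, smul_mul_assoc, TensorProduct.smul_tmul']
    first | rfl | (erw [LinearMap.smul_apply]; simp [TensorProduct.smul_tmul'])

/-- For `ζ = Σ u ⊗ v`, the map `a ↦ Σ α(a u) v`, i.e. `α(? ζ¹) ζ²`. -/
def sweed (α : A →ₗ[ℤ] A) (ζ : A ⊗[ℤ] A) : A →ₗ[ℤ] A :=
  ((LinearMap.mul' ℤ A).comp (TensorProduct.map α LinearMap.id)).comp ((lmulTen A).flip ζ)

/-- For `ζ = Σ u ⊗ v`, the element `Σ u r v` ("sandwich" evaluation `ζ¹ r ζ²`). -/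
def sandw (r : A) (ζ : A ⊗[ℤ] A) : A :=
  (LinearMap.mul' ℤ A) ((TensorProduct.map (LinearMap.mulRight ℤ r) LinearMap.id) ζ)

/-- `mul₂ ζ ξ = Σ (u x) ⊗ (y v)` for `ζ = Σ u ⊗ v`, `ξ = Σ x ⊗ y`:
the product `ξ ·_T ζ` of two elements of `T = (A ⊗_B A)^B` on representatives. -/
def mul₂ : (A ⊗[ℤ] A) →ₗ[ℤ] (A ⊗[ℤ] A) →ₗ[ℤ] (A ⊗[ℤ] A) :=
  TensorProduct.lift <| LinearMap.mk₂ ℤ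
    (fun u v => TensorProduct.map (LinearMap.mulLeft ℤ u) (LinearMap.mulRight ℤ v))
    (fun u u' v => by
      apply TensorProduct.ext'
      intro x y
      simp [add_mul, TensorProduct.add_tmul]
      first | rfl | (erw [LinearMap.add_apply]; simp))
    (fun z u v => by
      apply TensorProduct.ext'
      intro x y
      simp only [TensorProduct.map_tmul, LinearMap.mulLeft_apply, LinearMap.mulRight_apply,
        LinearMap.smul_apply, smul_mul_assoc, TensorProduct.smul_tmul']
      first | rfl | (erw [LinearMap.smul_apply]; simp [TensorProduct.smul_tmul']))
    (fun u v v' => by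
      apply TensorProduct.ext'
      intro x y
      simp [mul_add, TensorProduct.tmul_add]
      first | rfl | (erw [LinearMap.add_apply]; simp))
    (fun z u v => by
      apply TensorProduct.ext'
      intro x y
      simp only [TensorProduct.map_tmul, LinearMap.mulLeft_apply, LinearMap.mulRight_apply,
        LinearMap.smul_apply, mul_smul_comm, TensorProduct.tmul_smul]
      first | rfl | (erw [LinearMap.smul_apply]; simp [TensorProduct.tmul_smul]))

/-- `A` is balanced as a right `B`-module. -/
def RightBalanced : Prop :=
  ∀ φ : A →+ A,
    (∀ f : A →+ A, (∀ a : A, ∀ b ∈ B, f (a * b) = f a * b) → ∀ a, φ (f a) = f (φ a)) →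
    ∃ b ∈ B, ∀ a, φ a = a * b

end D2

end


open TensorProduct

noncomputable section

/-- The center of `A` maps centrally into the centralizer of `B`, making the latter a
central algebra over the former. -/
def centAlg {A : Type*} [Ring A] (B : Subring A) :
    Algebra (Subring.center A) (Subring.centralizer (B : Set A)) :=
  (Subring.inclusion (Subring.center_le_centralizer (B : Set A))).toAlgebra'
    (fun c x => Subtype.ext (by
      simpa using (Subring.mem_center_iff.mp c.2 (x : A)).symm))

attribute [local instance] centAlg

section Aux
variable {A : Type*} [Ring A] (B : Subring A)

/-- The sandwich map `u ⊗ v ↦ u * s * v` on `A ⊗[ℤ] A`. -/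
def sandwL (s : A) : (A ⊗[ℤ] A) →ₗ[ℤ] A :=
  (LinearMap.mul' ℤ A).comp (TensorProduct.map (LinearMap.mulRight ℤ s) LinearMap.id)

lemma sandwL_tmul (s x y : A) : sandwL s (x ⊗ₜ[ℤ] y) = x * s * y := rfl

/-- The sandwich map descends to `A ⊗_B A` when `s` centralizes `B`. -/
def SandwQ (s : A) (hs : s ∈ Subring.centralizer (B : Set A)) :
    D2.TensorSq A B →ₗ[ℤ] A :=
  Submodule.liftQ _ (sandwL s) (by
    rw [D2.relSub, Submodule.span_le]
    rintro x ⟨a, c, b, rfl⟩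
    simp only [SetLike.mem_coe, LinearMap.mem_ker, map_sub, sandwL, LinearMap.coe_comp,
      Function.comp_apply, TensorProduct.map_tmul, LinearMap.mulRight_apply,
      LinearMap.id_apply, LinearMap.mul'_apply, sub_eq_zero]
    have hb : (b : A) * s = s * (b : A) := Subring.mem_centralizer_iff.mp hs _ b.2
    show a * (b : A) * s * c = a * s * ((b : A) * c)
    rw [mul_assoc a (b : A) s, hb, ← mul_assoc, ← mul_assoc, mul_assoc (a * s)])

lemma SandwQ_mk (s : A) (hs : s ∈ Subring.centralizer (B : Set A)) (x y : A) :
    SandwQ B s hs (Submodule.Quotient.mk (x ⊗ₜ[ℤ] y)) = x * s * y := rfl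

/-- Extensionality for linear maps out of `TensorSq`. -/
lemma tsq_ext {M : Type*} [AddCommGroup M] [Module ℤ M]
    {f g : D2.TensorSq A B →ₗ[ℤ] M}
    (h : ∀ x y : A, f (Submodule.Quotient.mk (x ⊗ₜ[ℤ] y)) = g (Submodule.Quotient.mk (x ⊗ₜ[ℤ] y))) :
    f = g := by
  apply Submodule.linearMap_qext
  apply TensorProduct.ext'
  exact h

lemma lmul_mk (a x y : A) :
    D2.lmul A B a (Submodule.Quotient.mk (x ⊗ₜ[ℤ] y)) = Submodule.Quotient.mk ((a * x) ⊗ₜ[ℤ] y) := by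
  erw [D2.lmul, Submodule.mapQ_apply]
  rfl

lemma rmul_mk (a x y : A) :
    D2.rmul A B a (Submodule.Quotient.mk (x ⊗ₜ[ℤ] y)) = Submodule.Quotient.mk (x ⊗ₜ[ℤ] (y * a)) := by
  erw [D2.rmul, Submodule.mapQ_apply]
  rfl

lemma lmul_add_left (a a' : A) (t : D2.TensorSq A B) :
    D2.lmul A B (a + a') t = D2.lmul A B a t + D2.lmul A B a' t := by
  have : D2.lmul A B (a + a') = D2.lmul A B a + D2.lmul A B a' := by
    apply tsq_ext
    intro x y
    simp [lmul_mk, add_mul, TensorProduct.add_tmul, Submodule.Quotient.mk_add]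
  rw [this]; rfl

lemma lmul_zero_left (t : D2.TensorSq A B) : D2.lmul A B 0 t = 0 := by
  have : D2.lmul A B (0 : A) = 0 := by
    apply tsq_ext
    intro x y
    simp [lmul_mk]
  rw [this]; rfl

lemma lmul_mul_left (a a' : A) (t : D2.TensorSq A B) :
    D2.lmul A B (a * a') t = D2.lmul A B a (D2.lmul A B a' t) := by
  have : D2.lmul A B (a * a') = (D2.lmul A B a).comp (D2.lmul A B a') := by
    apply tsq_ext
    intro x y
    simp [lmul_mk, mul_assoc]
  rw [this]; rfl

lemma lmul_rmul_comm (a a' : A) (t : D2.TensorSq A B) :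
    D2.lmul A B a (D2.rmul A B a' t) = D2.rmul A B a' (D2.lmul A B a t) := by
  have : (D2.lmul A B a).comp (D2.rmul A B a') = (D2.rmul A B a').comp (D2.lmul A B a) := by
    apply tsq_ext
    intro x y
    simp [lmul_mk, rmul_mk]
  exact LinearMap.congr_fun this t

lemma SandwQ_lmul (s : A) (hs : s ∈ Subring.centralizer (B : Set A)) (a : A)
    (t : D2.TensorSq A B) :
    SandwQ B s hs (D2.lmul A B a t) = a * SandwQ B s hs t := by
  have : (SandwQ B s hs).comp (D2.lmul A B a) = (LinearMap.mulLeft ℤ a).comp (SandwQ B s hs) := by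
    apply tsq_ext
    intro x y
    simp [lmul_mk, SandwQ_mk, mul_assoc]
  exact LinearMap.congr_fun this t

lemma SandwQ_rmul (s : A) (hs : s ∈ Subring.centralizer (B : Set A)) (a : A)
    (t : D2.TensorSq A B) :
    SandwQ B s hs (D2.rmul A B a t) = SandwQ B s hs t * a := by
  have : (SandwQ B s hs).comp (D2.rmul A B a) = (LinearMap.mulRight ℤ a).comp (SandwQ B s hs) := by
    apply tsq_ext
    intro x y
    simp [rmul_mk, SandwQ_mk, mul_assoc]
  exact LinearMap.congr_fun this t

lemma SandwQ_add (s s' : A) (hs : s ∈ Subring.centralizer (B : Set A))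
    (hs' : s' ∈ Subring.centralizer (B : Set A)) (t : D2.TensorSq A B) :
    SandwQ B (s + s') (add_mem hs hs') t = SandwQ B s hs t + SandwQ B s' hs' t := by
  have : SandwQ B (s + s') (add_mem hs hs') = SandwQ B s hs + SandwQ B s' hs' := by
    apply tsq_ext
    intro x y
    simp [SandwQ_mk, mul_add, add_mul]
  rw [this]; rfl

lemma SandwQ_central (c s : A) (hc : c ∈ Subring.center A)
    (hs : s ∈ Subring.centralizer (B : Set A))
    (hcs : c * s ∈ Subring.centralizer (B : Set A)) (t : D2.TensorSq A B) :
    SandwQ B (c * s) hcs t = c * SandwQ B s hs t := by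
  have : SandwQ B (c * s) hcs = (LinearMap.mulLeft ℤ c).comp (SandwQ B s hs) := by
    apply tsq_ext
    intro x y
    have hcx : x * c = c * x := (Subring.mem_center_iff.mp hc x)
    simp only [SandwQ_mk, LinearMap.coe_comp, Function.comp_apply, LinearMap.mulLeft_apply]
    rw [← mul_assoc, hcx, mul_assoc c x s, mul_assoc c (x*s) y, mul_assoc x s y]
  rw [this]; rfl

end Aux

section Aux2
variable {A : Type*} [Ring A] (B : Subring A)

/-- The forward map `t ↦ (s ↦ t¹ s t²)` as a `Z`-linear map on the centralizer. -/
def phiMap (t : D2.TensorSq A B) :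
    (Subring.centralizer (B : Set A)) →ₗ[Subring.center A] A where
  toFun s := SandwQ B s.1 s.2 t
  map_add' s s' := SandwQ_add B s.1 s'.1 s.2 s'.2 t
  map_smul' c s := SandwQ_central B c.1 s.1 c.2 s.2 (c • s).2 t

lemma phiMap_apply (t : D2.TensorSq A B) (s : Subring.centralizer (B : Set A)) :
    phiMap B t s = SandwQ B s.1 s.2 t := rfl

end Aux2

section Aux3
variable {A : Type*} [Ring A] (B : Subring A)
variable (n : ℕ) (e : Fin n → A ⊗[ℤ] A) (r : Fin n → A)
    (hce : ∀ i, D2.IsACentral A B (Submodule.Quotient.mk (e i)))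
    (hr : ∀ i, r i ∈ Subring.centralizer (B : Set A))
    (hsys : ∑ i, D2.lmul A B (r i) (Submodule.Quotient.mk (e i)) = D2.tmulB A B 1 1)

/-- The candidate inverse `g ↦ ∑ᵢ g(rᵢ) eᵢ`. -/
def psiMap (g : (Subring.centralizer (B : Set A)) →ₗ[Subring.center A] A) :
    D2.TensorSq A B :=
  ∑ i, D2.lmul A B (g ⟨r i, hr i⟩) (Submodule.Quotient.mk (e i))

include hce hsys in
lemma psi_phi (t : D2.TensorSq A B) : psiMap B n e r hr (phiMap B t) = t := by
  obtain ⟨ζ, rfl⟩ := Submodule.Quotient.mk_surjective _ t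
  unfold psiMap
  simp only [phiMap_apply]
  induction ζ using TensorProduct.induction_on with
  | zero =>
    have hz : (Submodule.Quotient.mk (0 : A ⊗[ℤ] A) : D2.TensorSq A B) = 0 :=
      Submodule.Quotient.mk_zero _
    rw [hz]
    simp only [map_zero, lmul_zero_left]
    simp
  | tmul u v =>
    have key : ∀ i : Fin n,
        D2.lmul A B (SandwQ B (r i) (hr i) (Submodule.Quotient.mk (u ⊗ₜ[ℤ] v)))
          (Submodule.Quotient.mk (e i)) =
        D2.lmul A B u (D2.rmul A B v
          (D2.lmul A B (r i) (Submodule.Quotient.mk (e i)))) := by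
      intro i
      rw [SandwQ_mk, lmul_mul_left, lmul_mul_left, hce i v, lmul_rmul_comm]
    rw [Finset.sum_congr rfl fun i _ => key i, ← map_sum, ← map_sum, hsys]
    rw [show D2.tmulB A B 1 1 = Submodule.Quotient.mk ((1:A) ⊗ₜ[ℤ] (1:A)) from rfl,
      rmul_mk, lmul_mk, mul_one, one_mul]
  | add x y hx hy =>
    have hmk : (Submodule.Quotient.mk (x + y) : D2.TensorSq A B)
        = Submodule.Quotient.mk x + Submodule.Quotient.mk y := rfl
    rw [hmk]
    calc ∑ i, D2.lmul A B (SandwQ B (r i) (hr i)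
            (Submodule.Quotient.mk x + Submodule.Quotient.mk y))
          (Submodule.Quotient.mk (e i))
        = ∑ i, (D2.lmul A B (SandwQ B (r i) (hr i) (Submodule.Quotient.mk x))
              (Submodule.Quotient.mk (e i))
            + D2.lmul A B (SandwQ B (r i) (hr i) (Submodule.Quotient.mk y))
              (Submodule.Quotient.mk (e i))) := by
          refine Finset.sum_congr rfl fun i _ => ?_
          rw [map_add, lmul_add_left]
      _ = _ + _ := Finset.sum_add_distrib
      _ = Submodule.Quotient.mk x + Submodule.Quotient.mk y := by rw [hx, hy]

include hce hsys in
lemma phi_psi (g : (Subring.centralizer (B : Set A)) →ₗ[Subring.center A] A) :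
    phiMap B (psiMap B n e r hr g) = g := by
  apply LinearMap.ext
  intro s
  -- the "sandwich" values, which are central
  set ω : Fin n → A := fun i => SandwQ B s.1 s.2 (Submodule.Quotient.mk (e i)) with hω
  have hcent : ∀ i, ∀ a : A, a * ω i = ω i * a := by
    intro i a
    have h := congrArg (SandwQ B s.1 s.2) (hce i a)
    rwa [SandwQ_lmul, SandwQ_rmul] at h
  have hcentm : ∀ i, ω i ∈ Subring.center A := fun i =>
    Subring.mem_center_iff.mpr fun a => hcent i a
  -- decomposition of s
  have hdec : (s : A) = ∑ i, ω i * r i := by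
    have h := congrArg (SandwQ B s.1 s.2) hsys
    rw [map_sum] at h
    simp only [SandwQ_lmul] at h
    rw [show D2.tmulB A B 1 1 = Submodule.Quotient.mk ((1:A) ⊗ₜ[ℤ] (1:A)) from rfl,
      SandwQ_mk, one_mul, mul_one] at h
    rw [← h]
    exact Finset.sum_congr rfl fun i _ => (hcent i (r i))
  have hsR : s = ∑ i, (⟨ω i, hcentm i⟩ : Subring.center A) •
      (⟨r i, hr i⟩ : Subring.centralizer (B : Set A)) := by
    apply Subtype.ext
    rw [hdec]
    push_cast
    rfl
  calc phiMap B (psiMap B n e r hr g) s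
      = ∑ i, g ⟨r i, hr i⟩ * ω i := by
        rw [phiMap_apply, psiMap, map_sum]
        exact Finset.sum_congr rfl fun i _ => SandwQ_lmul B s.1 s.2 _ _
    _ = ∑ i, ω i * g ⟨r i, hr i⟩ :=
        Finset.sum_congr rfl fun i _ => hcent i _
    _ = g s := by
        conv_rhs => rw [hsR]
        rw [map_sum]
        exact Finset.sum_congr rfl fun i _ => by
          rw [map_smul]
          rfl

end Aux3

/-- for an H-separable extension, `A ⊗_B A ≅ Hom_Z(R, A)` via
`a ⊗ a' ↦ (r ↦ a r a')`, with inverse `g ↦ Σᵢ g(rᵢ) eᵢ`. -/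
theorem stmt10 {A : Type*} [Ring A] (B : Subring A)
    (n : ℕ) (e : Fin n → A ⊗[ℤ] A) (r : Fin n → A)
    (hce : ∀ i, D2.IsACentral A B (Submodule.Quotient.mk (e i)))
    (hr : ∀ i, r i ∈ Subring.centralizer (B : Set A))
    (hsys : ∑ i, D2.lmul A B (r i) (Submodule.Quotient.mk (e i)) = D2.tmulB A B 1 1) :
    ∃ Φ : D2.TensorSq A B ≃+
        ((Subring.centralizer (B : Set A)) →ₗ[Subring.center A] A),
      (∀ a a' : A, ∀ s : Subring.centralizer (B : Set A),
        Φ (D2.tmulB A B a a') s = a * (s : A) * a') ∧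
      (∀ g : (Subring.centralizer (B : Set A)) →ₗ[Subring.center A] A,
        Φ.symm g = ∑ i, D2.lmul A B (g ⟨r i, hr i⟩) (Submodule.Quotient.mk (e i))) := by
  refine ⟨{ toFun := phiMap B
            invFun := psiMap B n e r hr
            left_inv := psi_phi B n e r hce hr hsys
            right_inv := phi_psi B n e r hce hr hsys
            map_add' := fun t t' => LinearMap.ext fun s => map_add (SandwQ B s.1 s.2) t t' },
    ?_, ?_⟩
  · intro a a' s
    exact SandwQ_mk B s.1 s.2 a a'
  · intro g
    rfl


end
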